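/- If h ≥ 1, then for every x ∈ [0,1): |{1 ≤ k ≤ m : p_k > x·α}| ≥ h·(1−x); and if 1 ≤ h < m, then there exists x ∈ (0,1) such that |{1 ≤ k ≤ m : p_k > x·α}| ≤ (h+1)·(1−x). -/

import Mathlib

open Finset

attribute [local instance] Classical.propDecidable

/-- The `i`-th smallest (1-indexed) element of the multiset of p-values `{p_j : j ∈ I}`. -/
noncomputable def pOrd {m : ℕ} (p : Fin m → ℝ) (I : Finset (Fin m)) (i : ℕ) : ℝ :=
  ((I.val.map p).sort (· ≤ ·)).getD (i - 1) 0

/-- The Simes local test rejects `H_I` (written `I ∈ 𝒰`) iff `I` is nonempty and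
`|I|·p_{(i:I)} ≤ i·α` for at least one `1 ≤ i ≤ |I|`. -/
def SimesU {m : ℕ} (α : ℝ) (p : Fin m → ℝ) (I : Finset (Fin m)) : Prop :=
  ∃ i, 1 ≤ i ∧ i ≤ I.card ∧ (I.card : ℝ) * pOrd p I i ≤ (i : ℝ) * α

/-- Closed testing rejects `H_I` (written `I ∈ 𝒳`) iff `J ∈ 𝒰` for every `J ⊇ I`. -/
def ClosedX {m : ℕ} (α : ℝ) (p : Fin m → ℝ) (I : Finset (Fin m)) : Prop :=
  ∀ J, I ⊆ J → SimesU α p J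

/-- `K_i = {r_{m−i+1},…,r_m}`: the `i` indices with largest p-values. -/
def Kset {m : ℕ} (r : Fin m → Fin m) (i : ℕ) : Finset (Fin m) :=
  (Finset.univ.filter fun j : Fin m => m - i ≤ (j : ℕ)).image r

/-- `L_i = {r_1,…,r_i}`: the `i` indices with smallest p-values. -/
def Lset {m : ℕ} (r : Fin m → Fin m) (i : ℕ) : Finset (Fin m) :=
  (Finset.univ.filter fun j : Fin m => (j : ℕ) < i).image r

/-- `h = max{0 ≤ i ≤ m : K_i ∉ 𝒰}`. -/
noncomputable def hval {m : ℕ} (α : ℝ) (p : Fin m → ℝ) (r : Fin m → Fin m) : ℕ :=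
  sSup {i | i ≤ m ∧ ¬ SimesU α p (Kset r i)}

/-- `t(S) = max{|I| : I ⊆ S, I ∉ 𝒳}`. -/
noncomputable def tval {m : ℕ} (α : ℝ) (p : Fin m → ℝ) (S : Finset (Fin m)) : ℕ :=
  sSup {k | ∃ I, I ⊆ S ∧ ¬ ClosedX α p I ∧ I.card = k}

/-- `d(S) = |S| − t(S)`. -/
noncomputable def dval {m : ℕ} (α : ℝ) (p : Fin m → ℝ) (S : Finset (Fin m)) : ℕ :=
  S.card - tval α p S

/-- `q_α(S) = t(S)/|S|` for nonempty `S`, and `0` for `S = ∅`. -/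
noncomputable def qval {m : ℕ} (α : ℝ) (p : Fin m → ℝ) (S : Finset (Fin m)) : ℝ :=
  if S = ∅ then 0 else (tval α p S : ℝ) / S.card

/-- `z = 0` if `h = m`, else `z = min{m−h ≤ i ≤ m : h·p_{(i)} ≤ (i−m+h+1)·α}`. -/
noncomputable def zval {m : ℕ} (α : ℝ) (p : Fin m → ℝ) (r : Fin m → Fin m) : ℕ :=
  if hval α p r = m then 0 else
    sInf {i | m - hval α p r ≤ i ∧ i ≤ m ∧
      (hval α p r : ℝ) * pOrd p Finset.univ i ≤ ((i : ℝ) - m + hval α p r + 1) * α}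

/-- `b_q = max{1 ≤ i ≤ m : m·p_{(i)} ≤ i·q}` (with `b_q = 0` if no such `i`). -/
noncomputable def bval {m : ℕ} (q : ℝ) (p : Fin m → ℝ) : ℕ :=
  sSup {i | 1 ≤ i ∧ i ≤ m ∧ (m : ℝ) * pOrd p Finset.univ i ≤ (i : ℝ) * q}

/-!
Since `K_h` is not rejected, its `j`-th smallest p-value, the `(m - h + j)`-th smallest overall,
exceeds `jα/h`. For `x ∈ [0,1)` this puts every p-value of rank beyond `m - h + ⌊hx⌋` above `xα`,
and there are `h - ⌊hx⌋ ≥ h(1 - x)` of them. Since `K_{h+1}` is rejected, some `j ≤ h + 1` has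
`(h + 1) p_{(m-h-1+j)} ≤ jα`; here `j ≤ h`, because the largest p-value exceeds `α` by the first
fact. With `x = j/(h + 1)` only the `h + 1 - j = (h + 1)(1 - x)` p-values of rank beyond
`m - h - 1 + j` can exceed `xα`.
-/

section Ranks

variable {m i : ℕ}

-- 0-indexed: `r (topRank hi l)` is `r_{m-i+l+1}`, the `(l+1)`-th smallest p-value of `K_i`.
def topRank (hi : i ≤ m) (l : Fin i) : Fin m := ⟨m - i + l, by omega⟩

lemma topRank_injective (hi : i ≤ m) : Function.Injective (topRank hi) :=
  fun a b hab => Fin.ext (by have := congrArg Fin.val hab; simp only [topRank] at this; omega)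

lemma Kset_eq_image (r : Fin m → Fin m) (hi : i ≤ m) :
    Kset r i = univ.image (r ∘ topRank hi) := by
  have hfilter : univ.filter (fun j : Fin m => m - i ≤ (j : ℕ)) = univ.image (topRank hi) := by
    ext j
    simp only [mem_filter, mem_univ, true_and, mem_image, topRank]
    refine ⟨fun hj => ⟨⟨j - (m - i), by omega⟩, Fin.ext (by simp; omega)⟩, ?_⟩
    rintro ⟨l, rfl⟩
    simp
  rw [Kset, hfilter, image_image]

lemma Kset_zero (r : Fin m → Fin m) : Kset r 0 = ∅ := by
  rw [Kset_eq_image r (Nat.zero_le m)]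
  simp

lemma card_Kset {r : Fin m → Fin m} (hr : Function.Injective r) (hi : i ≤ m) :
    (Kset r i).card = i := by
  rw [Kset_eq_image r hi, card_image_of_injective _ (hr.comp (topRank_injective hi))]
  simp

lemma sort_map_Kset {p : Fin m → ℝ} {r : Fin m → Fin m} (hr : Function.Injective r)
    (hmono : Monotone (p ∘ r)) (hi : i ≤ m) :
    ((Kset r i).val.map p).sort (· ≤ ·) = List.ofFn (p ∘ r ∘ topRank hi) := by
  have hinj := hr.comp (topRank_injective hi)
  have hval : (Kset r i).val.map p = ↑(List.ofFn (p ∘ r ∘ topRank hi)) := by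
    rw [Kset_eq_image r hi, image_val_of_injOn hinj.injOn, Multiset.map_map,
      ← Fin.univ_val_map]
  rw [hval, Multiset.coe_sort]
  exact List.mergeSort_eq_self _ (List.pairwise_ofFn.mpr fun a b hab =>
    hmono (Fin.mk_le_mk.mpr (by omega)))

lemma pOrd_Kset {p : Fin m → ℝ} {r : Fin m → Fin m} (hr : Function.Injective r)
    (hmono : Monotone (p ∘ r)) (hi : i ≤ m) (l : Fin i) :
    pOrd p (Kset r i) (l + 1) = p (r (topRank hi l)) := by
  rw [pOrd, sort_map_Kset hr hmono hi, Nat.add_sub_cancel,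
    List.getD_eq_getElem _ _ (by simp), List.getElem_ofFn]
  rfl

lemma simesU_Kset_iff {α : ℝ} {p : Fin m → ℝ} {r : Fin m → Fin m} (hr : Function.Injective r)
    (hmono : Monotone (p ∘ r)) (hi : i ≤ m) :
    SimesU α p (Kset r i) ↔ ∃ l : Fin i, (i : ℝ) * p (r (topRank hi l)) ≤ ((l : ℕ) + 1) * α := by
  rw [SimesU, card_Kset hr hi]
  constructor
  · rintro ⟨j, hj1, hji, hj⟩
    refine ⟨⟨j - 1, by omega⟩, ?_⟩
    have hj' : j - 1 + 1 = j := by omega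
    rw [← pOrd_Kset hr hmono hi, ← Nat.cast_add_one]
    simpa only [hj'] using hj
  · rintro ⟨l, hl⟩
    exact ⟨l + 1, by omega, l.isLt, by rw [pOrd_Kset hr hmono hi]; exact_mod_cast hl⟩

end Ranks

section Counting

variable {m : ℕ} {p : Fin m → ℝ} {r : Fin m → Fin m} {t : ℝ}

lemma sub_le_card_filter_lt (hr : Function.Injective r) (hmono : Monotone (p ∘ r)) {a : Fin m}
    (ha : t < p (r a)) : m - a ≤ (univ.filter fun k => t < p k).card := by
  rw [← Fin.card_Ici a, ← card_image_of_injective _ hr]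
  refine card_le_card fun k hk => ?_
  obtain ⟨l, hl, rfl⟩ := mem_image.mp hk
  exact mem_filter.mpr ⟨mem_univ _, ha.trans_le (hmono (mem_Ici.mp hl))⟩

lemma card_filter_lt_le_sub (hr : Function.Surjective r) (hmono : Monotone (p ∘ r)) {a : Fin m}
    (ha : p (r a) ≤ t) : (univ.filter fun k => t < p k).card ≤ m - 1 - a := by
  rw [← Fin.card_Ioi a]
  refine (card_le_card fun k hk => ?_).trans (card_image_le (s := Ioi a) (f := r))
  obtain ⟨l, rfl⟩ := hr k
  refine mem_image_of_mem r (mem_Ioi.mpr (lt_of_not_ge fun hla => ?_))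
  exact (mem_filter.mp hk).2.not_ge ((hmono hla).trans ha)

end Counting

section CriticalIndex

variable {m : ℕ} (α : ℝ) (p : Fin m → ℝ) (r : Fin m → Fin m)

lemma hval_le : hval α p r ≤ m := csSup_le' fun _ hi => hi.1

lemma not_simesU_Kset_hval : ¬ SimesU α p (Kset r (hval α p r)) := by
  have hne : {i | i ≤ m ∧ ¬ SimesU α p (Kset r i)}.Nonempty :=
    ⟨0, Nat.zero_le m, by simp [SimesU, Kset_zero]⟩
  exact (Nat.sSup_mem hne ⟨m, fun _ hi => hi.1⟩).2

variable {α p r}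

lemma simesU_Kset_hval_succ (hlt : hval α p r < m) :
    SimesU α p (Kset r (hval α p r + 1)) := by
  by_contra hK
  have : hval α p r + 1 ≤ hval α p r := le_csSup ⟨m, fun _ hi => hi.1⟩ ⟨hlt, hK⟩
  omega

lemma hval_mul_one_sub_le_card_filter_lt (hα : 0 ≤ α) (hr : Function.Injective r)
    (hmono : Monotone (p ∘ r)) (h1 : 1 ≤ hval α p r) {x : ℝ} (hx0 : 0 ≤ x) (hx1 : x < 1) :
    (hval α p r : ℝ) * (1 - x) ≤ ((univ.filter fun k => x * α < p k).card : ℝ) := by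
  set h := hval α p r
  have hh : h ≤ m := hval_le α p r
  have hpos : (0 : ℝ) < h := by exact_mod_cast h1
  have hK := (simesU_Kset_iff hr hmono hh).not.mp (not_simesU_Kset_hval α p r)
  simp only [not_exists, not_le] at hK
  set c := ⌊h * x⌋₊
  have hc : c < h := (Nat.floor_lt (by positivity)).mpr (by nlinarith)
  have hc_le : (c : ℝ) ≤ h * x := Nat.floor_le (by positivity)
  have hxc : h * x ≤ c + 1 := (Nat.lt_floor_add_one _).le
  have ha : x * α < p (r (topRank hh ⟨c, hc⟩)) := by
    have := hK ⟨c, hc⟩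
    nlinarith [mul_le_mul_of_nonneg_right hxc hα]
  have hcount := sub_le_card_filter_lt hr hmono ha
  have hsub : m - (topRank hh ⟨c, hc⟩ : ℕ) = h - c := by
    simp only [topRank]
    omega
  rw [hsub] at hcount
  calc (h : ℝ) * (1 - x) ≤ h - c := by linarith
    _ = ((h - c : ℕ) : ℝ) := by rw [Nat.cast_sub hc.le]
    _ ≤ _ := by exact_mod_cast hcount

lemma exists_card_filter_lt_le_hval_succ_mul (hr : Function.Bijective r)
    (hmono : Monotone (p ∘ r)) (h1 : 1 ≤ hval α p r) (hlt : hval α p r < m) :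
    ∃ x : ℝ, 0 < x ∧ x < 1 ∧
      ((univ.filter fun k => x * α < p k).card : ℝ) ≤ ((hval α p r : ℝ) + 1) * (1 - x) := by
  set h := hval α p r
  have hh : h ≤ m := hval_le α p r
  have hpos : (0 : ℝ) < h := by exact_mod_cast h1
  obtain ⟨l, hl⟩ := (simesU_Kset_iff hr.1 hmono hlt).mp (simesU_Kset_hval_succ hlt)
  have hl_lt : (l : ℕ) < h := by
    have htop := (simesU_Kset_iff hr.1 hmono hh).not.mp (not_simesU_Kset_hval α p r)
    refine lt_of_not_ge fun hge => htop ⟨⟨h - 1, by omega⟩, ?_⟩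
    have hsame : topRank hh ⟨h - 1, by omega⟩ = topRank hlt l := by
      ext
      simp only [topRank]
      omega
    rw [hsame, Nat.cast_sub h1, Nat.cast_one, sub_add_cancel]
    have hl' : (h + 1 : ℝ) * p (r (topRank hlt l)) ≤ (h + 1) * α := by
      have : ((l : ℕ) : ℝ) = h := by exact_mod_cast le_antisymm (Nat.lt_succ_iff.mp l.isLt) hge
      simpa [this] using hl
    nlinarith
  refine ⟨((l : ℕ) + 1) / (h + 1), by positivity, (div_lt_one (by positivity)).mpr ?_, ?_⟩
  · exact_mod_cast Nat.succ_lt_succ hl_lt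
  have ha : p (r (topRank hlt l)) ≤ ((l : ℕ) + 1) / (h + 1) * α := by
    rw [div_mul_eq_mul_div, le_div_iff₀ (by positivity)]
    push_cast at hl
    linarith
  have hcount := card_filter_lt_le_sub hr.2 hmono ha
  have hsub : m - 1 - (topRank hlt l : ℕ) = h - l := by
    simp only [topRank]
    omega
  rw [hsub] at hcount
  calc ((univ.filter fun k => ((l : ℕ) + 1) / (h + 1) * α < p k).card : ℝ)
      ≤ ((h - l : ℕ) : ℝ) := by exact_mod_cast hcount
    _ = (h + 1) * (1 - ((l : ℕ) + 1) / (h + 1)) := by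
      rw [Nat.cast_sub hl_lt.le]
      field_simp
      ring

end CriticalIndex

theorem stmt14_general
    (m : ℕ) (α : ℝ) (hα : 0 ≤ α ∧ α ≤ 1)
    (p : Fin m → ℝ)
    (r : Fin m → Fin m) (hr : Function.Bijective r)
    (hmono : ∀ i j : Fin m, i ≤ j → p (r i) ≤ p (r j)) :
    (1 ≤ hval α p r → ∀ x : ℝ, 0 ≤ x → x < 1 →
      (hval α p r : ℝ) * (1 - x) ≤
        ((Finset.univ.filter fun k : Fin m => x * α < p k).card : ℝ)) ∧
    (1 ≤ hval α p r → hval α p r < m → ∃ x : ℝ, 0 < x ∧ x < 1 ∧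
      ((Finset.univ.filter fun k : Fin m => x * α < p k).card : ℝ) ≤
        ((hval α p r : ℝ) + 1) * (1 - x)) := by
  have hmono' : Monotone (p ∘ r) := fun i j => hmono i j
  exact ⟨fun h1 _ hx0 hx1 => hval_mul_one_sub_le_card_filter_lt hα.1 hr.1 hmono' h1 hx0 hx1,
    fun h1 hlt => exists_card_filter_lt_le_hval_succ_mul hr hmono' h1 hlt⟩

theorem stmt14
    (m : ℕ) (hm : 1 ≤ m) (α : ℝ) (hα : 0 ≤ α ∧ α ≤ 1)
    (p : Fin m → ℝ) (hp : ∀ i, 0 ≤ p i ∧ p i ≤ 1)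
    (r : Fin m → Fin m) (hr : Function.Bijective r)
    (hmono : ∀ i j : Fin m, i ≤ j → p (r i) ≤ p (r j)) :
    (1 ≤ hval α p r → ∀ x : ℝ, 0 ≤ x → x < 1 →
      (hval α p r : ℝ) * (1 - x) ≤
        ((Finset.univ.filter fun k : Fin m => x * α < p k).card : ℝ)) ∧
    (1 ≤ hval α p r → hval α p r < m → ∃ x : ℝ, 0 < x ∧ x < 1 ∧
      ((Finset.univ.filter fun k : Fin m => x * α < p k).card : ℝ) ≤
        ((hval α p r : ℝ) + 1) * (1 - x)) :=
  stmt14_general m α hα p r hr hmono
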